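/- Greedy augmentation guarantee: if f is a monotone submodular function with f(∅) = 0 on ground set E, S ⊆ E with |S| < k, and e* ∈ E maximizes the marginal gain f(S ∪ {e}) − f(S) over e ∈ E, then for any set T with |T| ≤ k, f(S ∪ {e*}) − f(S) ≥ (f(T) − f(S)) / k. -/
import Mathlib


open Finset

lemma greedy_aux {E : Type*} [Fintype E] [DecidableEq E]
    (f : Finset E → ℝ)
    (hmono : ∀ A B : Finset E, A ⊆ B → f A ≤ f B)
    (hsub : ∀ A B : Finset E, f (A ∪ B) + f (A ∩ B) ≤ f A + f B)
    (S : Finset E) (A : Finset E) :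
    f (S ∪ A) - f S ≤ ∑ e ∈ A, (f (insert e S) - f S) := by
  induction A using Finset.induction with
  | empty => simp
  | @insert a A ha ih =>
    rw [Finset.sum_insert ha]
    have h1 : S ∪ insert a A = (insert a S) ∪ (S ∪ A) := by
      ext x; simp; try tauto
    have h2 : S ⊆ (insert a S) ∩ (S ∪ A) := by
      intro x hx; simp [hx]
    have := hsub (insert a S) (S ∪ A)
    have hm := hmono _ _ h2
    rw [← h1] at this
    linarith

/-- Greedy augmentation guarantee: the best single-element marginal gain is at least
`(f(T) − f(S))/k` for any `T` with `|T| ≤ k`. -/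
theorem greedy_augmentation {E : Type*} [Fintype E] [DecidableEq E] [Nonempty E]
    (k : ℕ) (hk : 0 < k) (f : Finset E → ℝ)
    (hmono : ∀ A B : Finset E, A ⊆ B → f A ≤ f B)
    (hsub : ∀ A B : Finset E, f (A ∪ B) + f (A ∩ B) ≤ f A + f B)
    (hzero : f ∅ = 0)
    (S : Finset E) (hS : S.card < k)
    (estar : E) (hstar : ∀ e : E, f (insert e S) - f S ≤ f (insert estar S) - f S)
    (T : Finset E) (hT : T.card ≤ k) :
    (f T - f S) / (k : ℝ) ≤ f (insert estar S) - f S := by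
  have hk' : (0:ℝ) < k := by exact_mod_cast hk
  rw [div_le_iff₀ hk']
  have h1 : f T ≤ f (S ∪ T) := hmono _ _ (Finset.subset_union_right)
  have h2 := greedy_aux f hmono hsub S T
  have h3 : ∑ e ∈ T, (f (insert e S) - f S) ≤ T.card * (f (insert estar S) - f S) := by
    calc ∑ e ∈ T, (f (insert e S) - f S)
        ≤ ∑ _e ∈ T, (f (insert estar S) - f S) :=
            Finset.sum_le_sum (fun e _ => hstar e)
      _ = T.card * (f (insert estar S) - f S) := by
            rw [Finset.sum_const, nsmul_eq_mul]
  have hgain : 0 ≤ f (insert estar S) - f S := by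
    have := hmono S (insert estar S) (Finset.subset_insert _ _)
    linarith
  have h4 : (T.card : ℝ) * (f (insert estar S) - f S) ≤ (k:ℝ) * (f (insert estar S) - f S) := by
    apply mul_le_mul_of_nonneg_right _ hgain
    exact_mod_cast hT
  calc f T - f S ≤ f (S ∪ T) - f S := by linarith
    _ ≤ (k:ℝ) * (f (insert estar S) - f S) := by linarith
    _ = (f (insert estar S) - f S) * k := mul_comm _ _
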